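/- With the layer mapping g(ρ) = R + (ρ−R)/Ω(ρ) on [R, S), where Ω(ρ) = 1 − (ρ−R)ⁿ/(S−R)ⁿ and n ≥ 2 an integer, the interface is matched: g(R) = R, g'(R) = 1, and all derivatives g^{(j)}(R) vanish for 2 ≤ j ≤ n−1. -/

import Mathlib

/-!
Near `R`, `g ρ - ρ = (ρ - R) (1 - Ω ρ) / Ω ρ = (ρ - R) ^ (n + 1) ψ ρ` with `ψ` smooth at `R`
(because `Ω R = 1`), so by the Leibniz rule `g' R = 1` and the derivatives of order `2, …, n` of
`g` vanish at `R`. As `ρ → S⁻`, `Ω ρ → 0⁺` while `ρ - R → S - R > 0`, so `g ρ → ∞`.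
-/

open Filter Topology

section VanishingDerivatives

variable {𝕜 : Type*} [NontriviallyNormedField 𝕜] {f g : 𝕜 → 𝕜} {a : 𝕜} {m j : ℕ}

theorem iteratedDeriv_sub_pow_mul_eq_zero (hf : ContDiffAt 𝕜 j f a) (hjm : j < m) :
    iteratedDeriv j (fun x => (x - a) ^ m * f x) a = 0 := by
  rw [iteratedDeriv_fun_mul (by fun_prop) hf]
  refine Finset.sum_eq_zero fun i hi => ?_
  have him : i < m := by grind
  rw [iteratedDeriv_comp_sub_const i (· ^ m) a]
  simp [Nat.sub_ne_zero_of_lt him]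

theorem hasDerivAt_one_of_eventuallyEq_add_sub_pow_mul
    (hg : g =ᶠ[𝓝 a] fun x => x + (x - a) ^ m * f x) (hf : DifferentiableAt 𝕜 f a) (hm : 2 ≤ m) :
    HasDerivAt g 1 a := by
  have hpow := ((hasDerivAt_id a).sub_const a).pow m
  refine (((hasDerivAt_id a).add (hpow.mul hf.hasDerivAt)).congr_of_eventuallyEq hg).congr_deriv ?_
  simp [Nat.sub_ne_zero_of_lt (show 1 < m by omega), (show m ≠ 0 by omega)]

theorem iteratedDeriv_eq_zero_of_eventuallyEq_add_sub_pow_mul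
    (hg : g =ᶠ[𝓝 a] fun x => x + (x - a) ^ m * f x) (hf : ContDiffAt 𝕜 j f a)
    (hj : 2 ≤ j) (hjm : j < m) :
    iteratedDeriv j g a = 0 := by
  rw [hg.iteratedDeriv_eq, iteratedDeriv_fun_add (f := fun x => x) contDiffAt_id (by fun_prop),
    iteratedDeriv_fun_id, iteratedDeriv_sub_pow_mul_eq_zero hf hjm]
  simp [show j ≠ 0 by omega, show j ≠ 1 by omega]

end VanishingDerivatives

namespace LayerMap

variable {R S : ℝ} {n : ℕ}

noncomputable def Ω (R S : ℝ) (n : ℕ) (ρ : ℝ) : ℝ := 1 - ((ρ - R) / (S - R)) ^ n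

noncomputable def g (R S : ℝ) (n : ℕ) (ρ : ℝ) : ℝ := R + (ρ - R) / Ω R S n ρ

theorem contDiff_Ω {k : WithTop ℕ∞} : ContDiff ℝ k (Ω R S n) := by
  unfold Ω; fun_prop

theorem continuous_Ω : Continuous (Ω R S n) :=
  (contDiff_Ω (k := 0)).continuous

theorem Ω_left (hn : n ≠ 0) : Ω R S n R = 1 := by
  simp [Ω, hn]

theorem Ω_right (hRS : R ≠ S) : Ω R S n S = 0 := by
  simp [Ω, div_self (sub_ne_zero.mpr hRS.symm)]

theorem g_left (hn : n ≠ 0) : g R S n R = R := by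
  simp [g, Ω_left hn]

theorem g_eventuallyEq (hn : n ≠ 0) :
    g R S n =ᶠ[𝓝 R] fun ρ => ρ + (ρ - R) ^ (n + 1) * (((S - R) ^ n)⁻¹ * (Ω R S n ρ)⁻¹) := by
  have hΩ : ∀ᶠ ρ in 𝓝 R, Ω R S n ρ ≠ 0 :=
    continuous_Ω.continuousAt.eventually_ne (by simp [Ω_left hn])
  filter_upwards [hΩ] with ρ hρ
  have h1 : (ρ - R) ^ (n + 1) * ((S - R) ^ n)⁻¹ = (ρ - R) * (1 - Ω R S n ρ) := by
    rw [Ω, div_pow, pow_succ]; ring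
  rw [g, ← mul_assoc, h1]
  field_simp
  ring

theorem tendsto_Ω_nhdsGT_zero (hRS : R < S) (hn : n ≠ 0) :
    Tendsto (Ω R S n) (𝓝[<] S) (𝓝[>] 0) := by
  refine tendsto_nhdsWithin_iff.mpr ⟨?_, ?_⟩
  · simpa [Ω_right hRS.ne] using
      ((continuous_Ω (R := R) (S := S) (n := n)).tendsto S).mono_left nhdsWithin_le_nhds
  · filter_upwards [Ioo_mem_nhdsLT hRS] with ρ hρ
    have h0 : 0 ≤ (ρ - R) / (S - R) := div_nonneg (by linarith [hρ.1]) (by linarith)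
    have h1 : (ρ - R) / (S - R) < 1 := (div_lt_one (by linarith)).mpr (by linarith [hρ.2])
    simpa [Ω] using pow_lt_one₀ h0 h1 hn

theorem tendsto_g_atTop (hRS : R < S) (hn : n ≠ 0) :
    Tendsto (g R S n) (𝓝[<] S) atTop := by
  have hnum : Tendsto (fun ρ => ρ - R) (𝓝[<] S) (𝓝 (S - R)) :=
    ((continuous_id.sub continuous_const).tendsto S).mono_left nhdsWithin_le_nhds
  have hinv := tendsto_inv_nhdsGT_zero.comp (tendsto_Ω_nhdsGT_zero hRS hn)
  exact (tendsto_atTop_add_const_left _ R (hnum.pos_mul_atTop (sub_pos.mpr hRS) hinv)).congr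
    fun ρ => by simp [g, div_eq_mul_inv]

end LayerMap

/-- The null infinity layer mapping `g(ρ) = R + (ρ−R)/Ω(ρ)` with
`Ω(ρ) = 1 − ((ρ−R)/(S−R))ⁿ`, `n ≥ 2`, matches the interface:
`g(R) = R`, `g'(R) = 1`, `g⁽ʲ⁾(R) = 0` for `2 ≤ j ≤ n−1`, and `g → ∞` at `S⁻`. -/
theorem stmt_14 (R S : ℝ) (hRS : R < S) (n : ℕ) (hn : 2 ≤ n)
    (Ω g : ℝ → ℝ)
    (hΩ : ∀ ρ : ℝ, Ω ρ = 1 - ((ρ - R) / (S - R))^n)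
    (hg : ∀ ρ : ℝ, g ρ = R + (ρ - R) / Ω ρ) :
    g R = R ∧
    HasDerivAt g 1 R ∧
    (∀ j : ℕ, 2 ≤ j → j ≤ n - 1 → iteratedDeriv j g R = 0) ∧
    Filter.Tendsto g (nhdsWithin S (Set.Iio S)) Filter.atTop := by
  obtain rfl : Ω = LayerMap.Ω R S n := funext hΩ
  obtain rfl : g = LayerMap.g R S n := funext hg
  have hn0 : n ≠ 0 := by omega
  have hremainder (k : ℕ) :
      ContDiffAt ℝ k (fun ρ => ((S - R) ^ n)⁻¹ * (LayerMap.Ω R S n ρ)⁻¹) R :=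
    contDiffAt_const.mul (LayerMap.contDiff_Ω.contDiffAt.inv (by simp [LayerMap.Ω_left hn0]))
  refine ⟨LayerMap.g_left hn0, ?_, fun j hj hjn => ?_, LayerMap.tendsto_g_atTop hRS hn0⟩
  · exact hasDerivAt_one_of_eventuallyEq_add_sub_pow_mul (LayerMap.g_eventuallyEq hn0)
      ((hremainder 1).differentiableAt one_ne_zero) (by omega)
  · exact iteratedDeriv_eq_zero_of_eventuallyEq_add_sub_pow_mul (LayerMap.g_eventuallyEq hn0)
      (hremainder j) hj (by omega)
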